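/- arXiv:math/0310327 — 6 statements merged into one kernel-verified Lean document; each statement's English description precedes it below -/
import Mathlib

section
/- For any finite matroid M, the absolute value of the reduced Euler characteristic of the independence complex of M equals the sum, over all circuits C of M containing a fixed non-loop element e, of the absolute value of the reduced Euler characteristic of the independence complex of the contraction M/C. -/
/-- A circuit of a matroid: a minimal dependent subset of the ground set. -/
def Matroid.IsCircuit' {α : Type*} (M : Matroid α) (C : Set α) : Prop :=
  C ⊆ M.E ∧ ¬ M.Indep C ∧ ∀ D ⊂ C, M.Indep D

/-- The contraction `M/C` of a matroid, defined as the dual of the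
restriction of the dual to the complement of `C`. -/
noncomputable def Matroid.contract' {α : Type*} (M : Matroid α) (C : Set α) :
    Matroid α :=
  ((M✶).restrict (M.E \ C))✶

open scoped Classical in
/-- The reduced Euler characteristic of the independence complex `IN(M)` of a
matroid `M` on a finite ground type: `χ̃(IN(M)) = Σ_{I independent} (−1)^(|I|−1)`. -/
noncomputable def matroidRedEuler {α : Type*} [Fintype α] (M : Matroid α) : ℤ :=
  ∑ s : Finset α, if M.Indep ↑s then -(-1 : ℤ) ^ s.card else 0

/-!
Toggling `e` pairs each independent `I ∌ e` with `I ∪ {e}` whenever the latter is independent,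
and matched faces cancel in `χ̃(IN(M))`. An unmatched face `I` spans `e`, so `I ∪ {e}` contains a
unique circuit `C ∋ e`, its fundamental circuit, and `I ↦ I \ (C \ {e})` identifies the unmatched
faces with fundamental circuit `C` with the faces of `IN(M/C)`, shifting sizes by `|C| - 1`.
Hence `χ̃(M) = Σ_C (-1)^(|C|+1) χ̃(M/C)`. Since `r(M/C) + |C| = r(M) + 1`, induction on the ground
set shows through this recursion that `(-1)^(r(M)+1) χ̃(M) ≥ 0`, so all terms of the recursion
carry the sign of `χ̃(M)` and the recursion holds for absolute values.
-/

namespace Matroid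

open Set

variable {α : Type*} {M : Matroid α} {B C J T : Set α} {e : α}

lemma isCircuit'_iff : M.IsCircuit' C ↔ M.IsCircuit C := by
  rw [isCircuit_iff_forall_ssubset, IsCircuit', Dep]
  tauto

lemma contract'_eq_contract (M : Matroid α) (C : Set α) : M.contract' C = M ／ C := rfl

lemma IsCircuit.contract_indep_iff (hC : M.IsCircuit C) (he : e ∈ C) :
    (M ／ C).Indep J ↔ M.Indep (J ∪ (C \ {e})) ∧ Disjoint C J :=
  (hC.sdiff_singleton_isBasis he).contract_indep_iff

lemma IsCircuit.isBase_union_of_isBase_contract (hC : M.IsCircuit C) (he : e ∈ C)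
    (hB : (M ／ C).IsBase B) : M.IsBase (B ∪ (C \ {e})) := by
  obtain ⟨hBC, hdisj⟩ := (hC.contract_indep_iff he).1 hB.indep
  refine hBC.isBase_of_forall_insert fun x ⟨_, hxB⟩ hx ↦ ?_
  by_cases hxC : x ∈ C
  · obtain rfl : x = e := by by_contra hxe; exact hxB (Or.inr ⟨hxC, hxe⟩)
    exact hC.not_indep (hx.subset (sdiff_singleton_subset_iff.1 subset_union_right))
  · have hxB' : x ∉ B := fun h ↦ hxB (Or.inl h)
    have hxBC : (M ／ C).Indep (insert x B) := by
      rw [hC.contract_indep_iff he, insert_union]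
      exact ⟨hx, disjoint_insert_right.2 ⟨hxC, hdisj⟩⟩
    exact hxB' (hB.eq_of_subset_indep hxBC (subset_insert x B) ▸ mem_insert x B)

lemma IsCircuit.eRank_contract_add_encard (hC : M.IsCircuit C) :
    (M ／ C).eRank + C.encard = M.eRank + 1 := by
  obtain ⟨e, he⟩ := hC.nonempty
  obtain ⟨B, hB⟩ := (M ／ C).exists_isBase
  have hdisj : Disjoint B (C \ {e}) :=
    ((subset_sdiff.1 hB.subset_ground).2.mono_right sdiff_subset)
  rw [← hB.encard_eq_eRank, ← (hC.isBase_union_of_isBase_contract he hB).encard_eq_eRank,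
    encard_union_eq hdisj, add_assoc, encard_sdiff_singleton_add_one he]

lemma Indep.fundCircuit_isCircuit_of_not_indep_insert (hT : M.Indep T) (heE : e ∈ M.E)
    (heT : ¬ M.Indep (insert e T)) : M.IsCircuit (M.fundCircuit e T) := by
  have heT' : e ∉ T := fun h ↦ heT (by rwa [insert_eq_of_mem h])
  refine hT.fundCircuit_isCircuit ?_ heT'
  rw [hT.mem_closure_iff_of_notMem heT', dep_iff]
  exact ⟨heT, insert_subset heE hT.subset_ground⟩

lemma IsCircuit.fundCircuit_eq_iff (hC : M.IsCircuit C) (hT : M.Indep T) :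
    M.fundCircuit e T = C ↔ C \ {e} ⊆ T := by
  rw [sdiff_singleton_subset_iff]
  exact ⟨fun h ↦ h ▸ M.fundCircuit_subset_insert e T,
    fun h ↦ (hC.eq_fundCircuit_of_subset hT h).symm⟩

lemma IsCircuit.indep_and_fundCircuit_eq_iff (hC : M.IsCircuit C) (heC : e ∈ C) (heT : e ∉ T) :
    (M.Indep T ∧ ¬ M.Indep (insert e T) ∧ M.fundCircuit e T = C) ↔
      C \ {e} ⊆ T ∧ (M ／ C).Indep (T \ (C \ {e})) := by
  have hdisj (hCT : C \ {e} ⊆ T) : Disjoint C (T \ (C \ {e})) :=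
    disjoint_left.2 fun x hxC ⟨hxT, hx⟩ ↦ hx ⟨hxC, fun hxe ↦ heT (hxe ▸ hxT)⟩
  constructor
  · rintro ⟨hT, -, hTC⟩
    have hCT := (hC.fundCircuit_eq_iff hT).1 hTC
    rw [hC.contract_indep_iff heC, sdiff_union_of_subset hCT]
    exact ⟨hCT, hT, hdisj hCT⟩
  · rintro ⟨hCT, hJ⟩
    rw [hC.contract_indep_iff heC, sdiff_union_of_subset hCT] at hJ
    refine ⟨hJ.1, fun hins ↦ hC.not_indep (hins.subset ?_), (hC.fundCircuit_eq_iff hJ.1).2 hCT⟩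
    rwa [← sdiff_singleton_subset_iff]

end Matroid

section RedEuler

open Finset Matroid

variable {α : Type*} [Fintype α] {M : Matroid α} {e : α}

lemma matroidRedEuler_emptyOn : matroidRedEuler (emptyOn α) = -1 := by
  classical
  simp [matroidRedEuler]

lemma Matroid.IsCircuit.toNat_eRank_contract_add_card {C : Finset α} (hC : M.IsCircuit ↑C) :
    (M ／ ↑C).eRank.toNat + C.card = M.eRank.toNat + 1 := by
  have h := hC.eRank_contract_add_encard
  rw [Set.encard_coe_eq_coe_finsetCard,
    ← ENat.natCast_toNat ((M ／ ↑C).eRank_ne_top_iff.2 inferInstance),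
    ← ENat.natCast_toNat (M.eRank_ne_top_iff.2 inferInstance)] at h
  exact_mod_cast h

lemma Matroid.IsCircuit.neg_one_pow_eRank_mul {C : Finset α} (hC : M.IsCircuit ↑C) (x : ℤ) :
    (-1 : ℤ) ^ (M.eRank.toNat + 1) * ((-1) ^ (C.card + 1) * x) =
      (-1) ^ ((M ／ ↑C).eRank.toNat + 1) * x := by
  have h := hC.toNat_eRank_contract_add_card
  rw [← mul_assoc, ← pow_add, show M.eRank.toNat + 1 + (C.card + 1) =
    (M ／ ↑C).eRank.toNat + 1 + 2 * C.card by omega, pow_add, pow_mul, neg_one_sq, one_pow,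
    mul_one]

section Unmatched

variable [DecidableEq α]

open scoped Classical in
noncomputable def Matroid.unmatchedIndep (M : Matroid α) (e : α) : Finset (Finset α) :=
  (univ.erase e).powerset.filter fun t ↦ M.Indep ↑t ∧ ¬ M.Indep ↑(insert e t)

lemma Matroid.mem_unmatchedIndep {t : Finset α} :
    t ∈ M.unmatchedIndep e ↔ e ∉ t ∧ M.Indep ↑t ∧ ¬ M.Indep (insert e (t : Set α)) := by
  classical
  simp [unmatchedIndep, subset_erase]

open scoped Classical in
lemma matroidRedEuler_eq_sum_unmatchedIndep (M : Matroid α) (e : α) :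
    matroidRedEuler M = ∑ t ∈ M.unmatchedIndep e, -(-1 : ℤ) ^ t.card := by
  set f : Finset α → ℤ := fun s ↦ if M.Indep (s : Set α) then -(-1 : ℤ) ^ s.card else 0
  have hsplit := sum_powerset_insert (notMem_erase e univ) f
  rw [insert_erase (mem_univ e), powerset_univ] at hsplit
  rw [matroidRedEuler, hsplit, ← sum_add_distrib, unmatchedIndep, sum_filter]
  refine sum_congr rfl fun t ht ↦ ?_
  have het : e ∉ t := fun h ↦ by simpa using mem_powerset.1 ht h
  by_cases hins : M.Indep (insert e (t : Set α))
  · have ht : M.Indep (t : Set α) := hins.subset (Set.subset_insert e _)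
    simp [f, hins, ht, card_insert_of_notMem het, pow_succ]
  · simp [f, hins]

open scoped Classical in
lemma Matroid.IsCircuit.sum_unmatchedIndep_fundCircuit_eq {C : Finset α} (hC : M.IsCircuit ↑C)
    (heC : e ∈ C) :
    ∑ t ∈ (M.unmatchedIndep e).filter (fun t : Finset α ↦ M.fundCircuit e ↑t = ↑C),
        -(-1 : ℤ) ^ t.card =
      (-1 : ℤ) ^ (C.card + 1) * matroidRedEuler (M ／ ↑C) := by
  have hfiber (t : Finset α) :
      t ∈ (M.unmatchedIndep e).filter (fun t : Finset α ↦ M.fundCircuit e ↑t = ↑C) ↔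
        e ∉ t ∧ C.erase e ⊆ t ∧ (M ／ ↑C).Indep ↑(t \ C.erase e) := by
    rw [mem_filter, mem_unmatchedIndep, and_assoc, and_assoc, ← coe_subset, coe_sdiff, coe_erase]
    exact and_congr_right fun het ↦ hC.indep_and_fundCircuit_eq_iff heC het
  rw [matroidRedEuler, mul_sum]
  simp_rw [mul_ite, mul_zero]
  rw [← sum_filter]
  have hdisj {J : Finset α} (hJ : J ∈ univ.filter fun J : Finset α ↦ (M ／ ↑C).Indep ↑J) :
      Disjoint C J :=
    disjoint_coe.1 ((hC.contract_indep_iff heC).1 (mem_filter.1 hJ).2).2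
  refine sum_nbij' (fun t ↦ t \ C.erase e) (fun J ↦ J ∪ C.erase e) ?_ ?_ ?_ ?_ ?_
  · intro t ht
    exact mem_filter.2 ⟨mem_univ _, ((hfiber t).1 ht).2.2⟩
  · intro J hJ
    refine (hfiber _).2 ⟨?_, subset_union_right, ?_⟩
    · rw [mem_union, not_or]
      exact ⟨disjoint_left.1 (hdisj hJ) heC, notMem_erase e C⟩
    · rw [union_sdiff_cancel_right ((hdisj hJ).symm.mono_right (erase_subset e C))]
      exact (mem_filter.1 hJ).2
  · intro t ht
    exact sdiff_union_of_subset ((hfiber t).1 ht).2.1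
  · intro J hJ
    exact union_sdiff_cancel_right ((hdisj hJ).symm.mono_right (erase_subset e C))
  · intro t ht
    have hcard := card_sdiff_add_card_eq_card ((hfiber t).1 ht).2.1
    rw [← hcard, ← card_erase_add_one heC]
    ring

open scoped Classical in
lemma matroidRedEuler_eq_sum_isCircuit (heE : e ∈ M.E) :
    matroidRedEuler M = ∑ C ∈ univ.filter (fun C : Finset α ↦ M.IsCircuit ↑C ∧ e ∈ C),
      (-1 : ℤ) ^ (C.card + 1) * matroidRedEuler (M ／ ↑C) := by
  have hmaps (t : Finset α) (ht : t ∈ M.unmatchedIndep e) :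
      (M.fundCircuit e ↑t).toFinset ∈ univ.filter (fun C : Finset α ↦ M.IsCircuit ↑C ∧ e ∈ C) := by
    obtain ⟨-, hT, hins⟩ := mem_unmatchedIndep.1 ht
    simpa [mem_fundCircuit] using hT.fundCircuit_isCircuit_of_not_indep_insert heE hins
  rw [matroidRedEuler_eq_sum_unmatchedIndep M e, ← sum_fiberwise_of_maps_to hmaps]
  refine sum_congr rfl fun C hC ↦ ?_
  obtain ⟨hC, heC⟩ := (mem_filter.1 hC).2
  rw [← hC.sum_unmatchedIndep_fundCircuit_eq heC]
  refine sum_congr (filter_congr fun t _ ↦ ?_) fun _ _ ↦ rfl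
  rw [← coe_inj, Set.coe_toFinset]

end Unmatched

lemma neg_one_pow_eRank_mul_matroidRedEuler_nonneg (M : Matroid α) :
    0 ≤ (-1 : ℤ) ^ (M.eRank.toNat + 1) * matroidRedEuler M := by
  induction hn : M.E.ncard using Nat.strong_induction_on generalizing M with
  | _ n ih =>
  classical
  obtain hE | ⟨e, heE⟩ := M.E.eq_empty_or_nonempty
  · rw [ground_eq_empty_iff.1 hE]
    simp [matroidRedEuler_emptyOn, eRank_emptyOn]
  rw [matroidRedEuler_eq_sum_isCircuit heE, mul_sum]
  refine sum_nonneg fun C hC ↦ ?_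
  obtain ⟨hC, heC⟩ := (mem_filter.1 hC).2
  rw [hC.neg_one_pow_eRank_mul]
  refine ih _ ?_ _ rfl
  rw [← hn, contract_ground]
  exact Set.ncard_lt_ncard (Set.sdiff_ssubset_left_iff.2 ⟨e, heE, heC⟩)

lemma natAbs_matroidRedEuler (M : Matroid α) :
    ((matroidRedEuler M).natAbs : ℤ) = (-1) ^ (M.eRank.toNat + 1) * matroidRedEuler M := by
  rw [← abs_of_nonneg (neg_one_pow_eRank_mul_matroidRedEuler_nonneg M), abs_mul, abs_pow, abs_neg,
    abs_one, one_pow, one_mul, Int.natCast_natAbs]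

end RedEuler

open scoped Classical in
theorem abs_redEuler_eq_sum_circuits_general {α : Type*} [Fintype α] [DecidableEq α]
    (M : Matroid α) (e : α) (heE : e ∈ M.E) :
    (matroidRedEuler M).natAbs =
      ∑ C ∈ Finset.univ.filter
          (fun C : Finset α => M.IsCircuit' ↑C ∧ e ∈ C),
        (matroidRedEuler (M.contract' ↑C)).natAbs := by
  simp only [Matroid.isCircuit'_iff, Matroid.contract'_eq_contract]
  rw [← Int.natCast_inj, Nat.cast_sum, natAbs_matroidRedEuler,
    matroidRedEuler_eq_sum_isCircuit heE, Finset.mul_sum]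
  refine Finset.sum_congr rfl fun C hC ↦ ?_
  rw [(Finset.mem_filter.1 hC).2.1.neg_one_pow_eRank_mul, natAbs_matroidRedEuler]

open scoped Classical in
/-- **Euler characteristics and circuit contractions.**
For a finite matroid `M` with a fixed non-loop element `e`,
`|χ̃(IN(M))| = Σ_{C circuit of M, e ∈ C} |χ̃(IN(M/C))|`. -/
theorem abs_redEuler_eq_sum_circuits {α : Type*} [Fintype α] [DecidableEq α]
    (M : Matroid α) (e : α) (heE : e ∈ M.E) (heNonloop : e ∉ M.closure ∅) :
    (matroidRedEuler M).natAbs =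
      ∑ C ∈ Finset.univ.filter
          (fun C : Finset α => M.IsCircuit' ↑C ∧ e ∈ C),
        (matroidRedEuler (M.contract' ↑C)).natAbs :=
  abs_redEuler_eq_sum_circuits_general M e heE
end

section
/- A simplicial complex Δ on the linearly ordered vertex set [n] = {1,...,n} is shifted if and only if: Δ is a near-cone with apex 1, and both the deletion Δ−1 and the contraction Δ/1 are shifted on the ordered vertex set {2,...,n}. -/
open Finset

/-- Componentwise domination: for finsets of naturals `F = {f_1<⋯<f_k}` and
`G = {g_1<⋯<g_k}`, `domP F G` means `|F| = |G|` and `f_p ≤ g_p` for all `p`. -/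
def domP (F G : Finset ℕ) : Prop :=
  List.Forall₂ (· ≤ ·) (F.sort (· ≤ ·)) (G.sort (· ≤ ·))

/-- A collection of faces is shifted with respect to the ordered ground set `A`
if it is closed under replacing a face by a componentwise smaller subset of `A`. -/
def ShiftedOn (A : Finset ℕ) (K : Finset (Finset ℕ)) : Prop :=
  ∀ G ∈ K, ∀ F ⊆ A, domP F G → F ∈ K

/-- `K` is a near-cone with apex `1`: whenever `F ∈ K`, `1 ∉ F` and `v ∈ F`,
also `(F∖{v}) ∪ {1} ∈ K`. -/
def NearCone1 (K : Finset (Finset ℕ)) : Prop :=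
  ∀ F ∈ K, 1 ∉ F → ∀ v ∈ F, insert 1 (F.erase v) ∈ K

lemma sort_insert_le {a : ℕ} {F : Finset ℕ} (h : ∀ b ∈ F, a ≤ b) (ha : a ∉ F) :
    (insert a F).sort (· ≤ ·) = a :: F.sort (· ≤ ·) :=
  Finset.sort_insert _ h ha

lemma sort_eq_min'_cons (F : Finset ℕ) (hF : F.Nonempty) :
    F.sort (· ≤ ·) = F.min' hF :: (F.erase (F.min' hF)).sort (· ≤ ·) := by
  conv_lhs => rw [← Finset.insert_erase (F.min'_mem hF)]
  exact sort_insert_le (fun b hb => F.min'_le b (Finset.mem_of_mem_erase hb))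
    (Finset.notMem_erase _ _)

lemma domP_card {F G : Finset ℕ} (h : domP F G) : F.card = G.card := by
  have := h.length_eq
  simpa using this

lemma domP_nonempty {F G : Finset ℕ} (h : domP F G) (hF : F.Nonempty) : G.Nonempty := by
  rw [← Finset.card_pos] at hF ⊢
  rw [← domP_card h]; exact hF

lemma domP_min'_le {F G : Finset ℕ} (h : domP F G) (hF : F.Nonempty) (hG : G.Nonempty) :
    F.min' hF ≤ G.min' hG := by
  unfold domP at h
  rw [sort_eq_min'_cons F hF, sort_eq_min'_cons G hG, List.forall₂_cons] at h
  exact h.1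

lemma domP_erase_min' {F G : Finset ℕ} (h : domP F G) (hF : F.Nonempty) (hG : G.Nonempty) :
    domP (F.erase (F.min' hF)) (G.erase (G.min' hG)) := by
  unfold domP at h ⊢
  rw [sort_eq_min'_cons F hF, sort_eq_min'_cons G hG, List.forall₂_cons] at h
  exact h.2

lemma domP_insert_one {F G : Finset ℕ} (hF : ∀ x ∈ F, 1 < x) (hG : ∀ x ∈ G, 1 < x)
    (h : domP F G) : domP (insert 1 F) (insert 1 G) := by
  unfold domP at h ⊢
  rw [sort_insert_le (fun b hb => le_of_lt (hF b hb)) (fun hc => lt_irrefl 1 (hF 1 hc)),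
      sort_insert_le (fun b hb => le_of_lt (hG b hb)) (fun hc => lt_irrefl 1 (hG 1 hc))]
  exact List.Forall₂.cons (le_refl 1) h

lemma domP_replace : ∀ (F : Finset ℕ) {v w : ℕ}, w < v → v ∈ F → w ∉ F →
    domP (insert w (F.erase v)) F := by
  intro F
  induction F using Finset.strongInduction with
  | _ F ih =>
    intro v w hwv hv hw
    have hFne : F.Nonempty := ⟨v, hv⟩
    set m := F.min' hFne with hm
    have hmF : m ∈ F := F.min'_mem hFne
    by_cases hvm : v = m
    · subst hvm
      unfold domP
      rw [sort_insert_le (fun b hb => le_of_lt (lt_of_lt_of_le hwv (F.min'_le b (Finset.mem_of_mem_erase hb))))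
          (fun hc => hw (Finset.mem_of_mem_erase hc)),
        sort_eq_min'_cons F hFne]
      exact List.Forall₂.cons (le_of_lt hwv) (List.forall₂_same.2 fun _ _ => le_refl _)
    · have hmv : m < v := lt_of_le_of_ne (F.min'_le v hv) (fun h => hvm h.symm)
      have hmev : m ∈ F.erase v := Finset.mem_erase.2 ⟨fun h => hvm h.symm, hmF⟩
      rcases lt_trichotomy w m with hwm | hwm | hwm
      · have hrec : domP (insert m ((F.erase m).erase v)) (F.erase m) :=
          ih (F.erase m) (Finset.erase_ssubset hmF) hmv
            (Finset.mem_erase.2 ⟨fun h => hvm h, hv⟩) (Finset.notMem_erase _ _)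
        have hins : insert m ((F.erase m).erase v) = F.erase v := by
          rw [Finset.erase_right_comm, Finset.insert_erase hmev]
        rw [hins] at hrec
        unfold domP at hrec ⊢
        rw [sort_insert_le (fun b hb => le_of_lt (lt_of_lt_of_le hwm (F.min'_le b (Finset.mem_of_mem_erase hb))))
            (fun hc => hw (Finset.mem_of_mem_erase hc)),
          sort_eq_min'_cons F hFne]
        exact List.Forall₂.cons (le_of_lt hwm) hrec
      · exact absurd (hwm ▸ hmF) hw
      · have hrec : domP (insert w ((F.erase m).erase v)) (F.erase m) :=
          ih (F.erase m) (Finset.erase_ssubset hmF) hwv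
            (Finset.mem_erase.2 ⟨fun h => hvm h, hv⟩)
            (fun hc => hw (Finset.mem_of_mem_erase hc))
        unfold domP at hrec ⊢
        have h1 : (insert w (F.erase v)) = insert m (insert w ((F.erase m).erase v)) := by
          rw [Finset.insert_comm, Finset.erase_right_comm, Finset.insert_erase hmev]
        have hmnot : m ∉ insert w ((F.erase m).erase v) := by
          simp only [Finset.mem_insert, Finset.mem_erase]
          push_neg
          exact ⟨ne_of_lt hwm, fun _ h => absurd rfl h⟩
        have hmle : ∀ b ∈ insert w ((F.erase m).erase v), m ≤ b := by
          intro b hb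
          rcases Finset.mem_insert.1 hb with rfl | hb
          · exact le_of_lt hwm
          · exact F.min'_le b (Finset.mem_of_mem_erase (Finset.mem_of_mem_erase hb))
        rw [h1, sort_insert_le hmle hmnot, sort_eq_min'_cons F hFne]
        exact List.Forall₂.cons (le_refl m) hrec

/-- **Recursive characterization of shifted complexes.**
A simplicial complex `Δ` on the linearly ordered vertex set `[n] = {1,…,n}` is
shifted iff `Δ` is a near-cone with apex `1` and both the deletion `Δ−1` and the
contraction `Δ/1` are shifted on the ordered vertex set `{2,…,n}`. -/
theorem shifted_iff_nearCone_del_con (n : ℕ) (K : Finset (Finset ℕ))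
    (hK : ∀ F ∈ K, ∀ G ⊆ F, G ∈ K)                -- `Δ` is a simplicial complex
    (hV : ∀ F ∈ K, F ⊆ Finset.Icc 1 n) :           -- with vertex set `[n]`
    ShiftedOn (Finset.Icc 1 n) K ↔
      (NearCone1 K ∧
       ShiftedOn (Finset.Icc 2 n) (K.filter (fun F => 1 ∉ F)) ∧
       ShiftedOn (Finset.Icc 2 n)
         ((K.filter (fun F => 1 ∈ F)).image (fun F => F.erase 1))) := by
  constructor
  · intro h
    refine ⟨?_, ?_, ?_⟩
    · -- near-cone
      intro F hF h1F v hv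
      have hsub := hV F hF
      have hv1 := Finset.mem_Icc.1 (hsub hv)
      have hvgt : 1 < v := by
        rcases Nat.lt_or_ge 1 v with h' | h'
        · exact h'
        · exfalso; apply h1F
          have : v = 1 := le_antisymm h' hv1.1
          exact this ▸ hv
      refine h F hF (insert 1 (F.erase v)) ?_ (domP_replace F hvgt hv h1F)
      intro x hx
      rcases Finset.mem_insert.1 hx with rfl | hx
      · exact Finset.mem_Icc.2 ⟨le_refl 1, le_trans hv1.1 hv1.2⟩
      · exact hsub (Finset.mem_of_mem_erase hx)
    · -- deletion shifted
      intro G hG F hFsub hdom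
      rw [Finset.mem_filter] at hG ⊢
      have hF2 : ∀ x ∈ F, 2 ≤ x := fun x hx => (Finset.mem_Icc.1 (hFsub hx)).1
      refine ⟨h G hG.1 F ?_ hdom, fun hc => by have := hF2 1 hc; omega⟩
      intro x hx
      have := Finset.mem_Icc.1 (hFsub hx)
      exact Finset.mem_Icc.2 ⟨by omega, this.2⟩
    · -- contraction shifted
      intro G' hG' F hFsub hdom
      rw [Finset.mem_image] at hG'
      obtain ⟨G, hG, rfl⟩ := hG'
      rw [Finset.mem_filter] at hG
      have hGsub := hV G hG.1
      have hn : 1 ≤ n := (Finset.mem_Icc.1 (hGsub hG.2)).2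
      have hF2 : ∀ x ∈ F, 1 < x := fun x hx => (Finset.mem_Icc.1 (hFsub hx)).1
      have hG2 : ∀ x ∈ G.erase 1, 1 < x := by
        intro x hx
        have h1 := (Finset.mem_erase.1 hx).1
        have h2 := (Finset.mem_Icc.1 (hGsub (Finset.mem_of_mem_erase hx))).1
        omega
      have hdom2 : domP (insert 1 F) (insert 1 (G.erase 1)) := domP_insert_one hF2 hG2 hdom
      rw [Finset.insert_erase hG.2] at hdom2
      have h1F : 1 ∉ F := fun hc => lt_irrefl 1 (hF2 1 hc)
      have hmem : insert 1 F ∈ K := by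
        refine h G hG.1 _ ?_ hdom2
        intro x hx
        rcases Finset.mem_insert.1 hx with rfl | hx
        · exact Finset.mem_Icc.2 ⟨le_refl 1, hn⟩
        · have := Finset.mem_Icc.1 (hFsub hx); exact Finset.mem_Icc.2 ⟨by omega, this.2⟩
      exact Finset.mem_image.2 ⟨insert 1 F,
        Finset.mem_filter.2 ⟨hmem, Finset.mem_insert_self _ _⟩, Finset.erase_insert h1F⟩
  · rintro ⟨hNC, hDel, hCon⟩ G hG F hFsub hdom
    have hGsub := hV G hG
    rcases F.eq_empty_or_nonempty with rfl | hFne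
    · exact hK G hG ∅ (Finset.empty_subset _)
    have hGne : G.Nonempty := domP_nonempty hdom hFne
    have hFlb : 1 ≤ F.min' hFne := (Finset.mem_Icc.1 (hFsub (F.min'_mem hFne))).1
    by_cases h1F : 1 ∈ F
    · -- 1 ∈ F : use contraction (and near-cone if 1 ∉ G)
      have hminF : F.min' hFne = 1 := le_antisymm (F.min'_le 1 h1F) hFlb
      have htail := domP_erase_min' hdom hFne hGne
      rw [hminF] at htail
      have hsubF2 : F.erase 1 ⊆ Finset.Icc 2 n := by
        intro x hx
        have h1 := (Finset.mem_erase.1 hx).1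
        have h2 := Finset.mem_Icc.1 (hFsub (Finset.mem_of_mem_erase hx))
        exact Finset.mem_Icc.2 ⟨by omega, h2.2⟩
      have hGe : G.erase (G.min' hGne) ∈
          (K.filter (fun F => 1 ∈ F)).image (fun F => F.erase 1) := by
        by_cases h1G : 1 ∈ G
        · have hminG : G.min' hGne = 1 :=
            le_antisymm (G.min'_le 1 h1G) (Finset.mem_Icc.1 (hGsub (G.min'_mem hGne))).1
          rw [hminG]
          exact Finset.mem_image.2 ⟨G, Finset.mem_filter.2 ⟨hG, h1G⟩, rfl⟩
        · have hNCres : insert 1 (G.erase (G.min' hGne)) ∈ K :=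
            hNC G hG h1G _ (G.min'_mem hGne)
          have h1ne : 1 ∉ G.erase (G.min' hGne) := fun hc => h1G (Finset.mem_of_mem_erase hc)
          exact Finset.mem_image.2 ⟨insert 1 (G.erase (G.min' hGne)),
            Finset.mem_filter.2 ⟨hNCres, Finset.mem_insert_self _ _⟩, Finset.erase_insert h1ne⟩
      have hres := hCon _ hGe (F.erase 1) hsubF2 htail
      rw [Finset.mem_image] at hres
      obtain ⟨G₀, hG₀, hEq⟩ := hres
      rw [Finset.mem_filter] at hG₀
      have hFG₀ : F = G₀ := by
        rw [← Finset.insert_erase h1F, ← hEq, Finset.insert_erase hG₀.2]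
      rw [hFG₀]; exact hG₀.1
    · -- 1 ∉ F : then 1 ∉ G, use deletion
      have h1G : 1 ∉ G := by
        intro h1G
        have hminG : G.min' hGne = 1 :=
          le_antisymm (G.min'_le 1 h1G) (Finset.mem_Icc.1 (hGsub (G.min'_mem hGne))).1
        have := domP_min'_le hdom hFne hGne
        rw [hminG] at this
        have : F.min' hFne = 1 := le_antisymm this hFlb
        exact h1F (this ▸ F.min'_mem hFne)
      have hsubF2 : F ⊆ Finset.Icc 2 n := by
        intro x hx
        have h2 := Finset.mem_Icc.1 (hFsub hx)
        have : x ≠ 1 := fun hc => h1F (hc ▸ hx)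
        exact Finset.mem_Icc.2 ⟨by omega, h2.2⟩
      have := hDel G (Finset.mem_filter.2 ⟨hG, h1G⟩) F hsubF2 hdom
      exact (Finset.mem_filter.1 this).1
end

section
/- If Δ is a pure d-dimensional near-cone with apex 1, then Δ equals the d-skeleton of the cone over Δ−1 with apex 1; that is, Δ = (1 ∗ (Δ−1))^{(d)}. -/
/-! In a pure `d`-dimensional complex every face lies in a facet of cardinality `d + 1`. A face
`G` of dimension `< d` is then a proper subface of a facet `H`, and `insert 1 G` is a face:
either `1 ∈ H` already, or the near-cone condition applied to `H` and a vertex `v ∈ H \ G`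
gives the face `insert 1 (H.erase v) ⊇ insert 1 G`. So adding the apex to any face of
`Δ - 1` of dimension `< d` stays inside `Δ`, which is exactly the inclusion
`(1 ∗ (Δ - 1))^{(d)} ⊆ Δ`; the other inclusion is immediate. -/

open Finset

/-- The cone with apex `1` over a complex `Γ` (whose faces avoid `1`):
`1 ∗ Γ = {F, F ∪ {1} : F ∈ Γ}`. -/
def cone1 (Γ : Finset (Finset ℕ)) : Finset (Finset ℕ) :=
  Γ ∪ Γ.image (insert 1)

lemma exists_superset_card_eq_of_pure {K : Finset (Finset ℕ)} {d : ℕ}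
    (hpure : ∀ F ∈ K, (∀ G ∈ K, F ⊆ G → F = G) → F.card = d + 1) {F : Finset ℕ} (hF : F ∈ K) :
    ∃ H ∈ K, F ⊆ H ∧ H.card = d + 1 := by
  obtain ⟨H, hFH, hH⟩ := K.exists_le_maximal hF
  exact ⟨H, hH.prop, hFH, hpure H hH.prop fun G hG hHG => le_antisymm hHG (hH.2 hG hHG)⟩

lemma NearCone1.insert_one_mem_of_ssubset {K : Finset (Finset ℕ)} (hNC : NearCone1 K)
    (hK : ∀ F ∈ K, ∀ G ⊆ F, G ∈ K) {G H : Finset ℕ} (hH : H ∈ K) (hGH : G ⊂ H) :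
    insert 1 G ∈ K := by
  by_cases h1H : 1 ∈ H
  · exact hK H hH _ (insert_subset h1H hGH.subset)
  obtain ⟨v, hvH, hvG⟩ := exists_of_ssubset hGH
  exact hK _ (hNC H hH h1H v hvH) _ (insert_subset_insert _ (subset_erase.2 ⟨hGH.subset, hvG⟩))

theorem pure_nearCone_eq_skeleton_cone_general (d : ℕ) (K : Finset (Finset ℕ))
    (hK : ∀ F ∈ K, ∀ G ⊆ F, G ∈ K)                -- `Δ` is a simplicial complex
    (hNC : NearCone1 K)                            -- near-cone with apex `1`
    (hpure : ∀ F ∈ K, (∀ G ∈ K, F ⊆ G → F = G) → F.card = d + 1) :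
    -- every facet has dimension `d` : `Δ` is pure `d`-dimensional
    K = (cone1 (K.filter (fun F => 1 ∉ F))).filter (fun F => F.card ≤ d + 1) := by
  ext F
  simp only [cone1, mem_filter, mem_union, mem_image]
  constructor
  · intro hF
    obtain ⟨H, -, hFH, hH⟩ := exists_superset_card_eq_of_pure hpure hF
    refine ⟨?_, hH ▸ card_le_card hFH⟩
    by_cases h1 : 1 ∈ F
    · exact .inr ⟨F.erase 1, ⟨hK F hF _ (erase_subset _ _), notMem_erase _ _⟩, insert_erase h1⟩
    · exact .inl ⟨hF, h1⟩
  · rintro ⟨⟨hF, -⟩ | ⟨G, ⟨hG, hG1⟩, rfl⟩, hcard⟩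
    · exact hF
    obtain ⟨H, hH, hGH, hHcard⟩ := exists_superset_card_eq_of_pure hpure hG
    rw [card_insert_of_notMem hG1] at hcard
    exact hNC.insert_one_mem_of_ssubset hK hH (ssubset_of_subset_of_ne hGH (by rintro rfl; omega))

/-- **A pure near-cone is a skeleton of a cone.**
If `Δ` is a pure `d`-dimensional near-cone with apex `1` (every facet has
dimension `d`, i.e. cardinality `d+1`), then `Δ = (1 ∗ (Δ−1))^{(d)}`, the
`d`-skeleton of the cone with apex `1` over the deletion `Δ−1`. -/
theorem pure_nearCone_eq_skeleton_cone (d : ℕ) (K : Finset (Finset ℕ))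
    (hK : ∀ F ∈ K, ∀ G ⊆ F, G ∈ K)                -- `Δ` is a simplicial complex
    (hne : K.Nonempty)
    (hNC : NearCone1 K)                            -- near-cone with apex `1`
    (hpure : ∀ F ∈ K, (∀ G ∈ K, F ⊆ G → F = G) → F.card = d + 1) :
    -- every facet has dimension `d` : `Δ` is pure `d`-dimensional
    K = (cone1 (K.filter (fun F => 1 ∉ F))).filter (fun F => F.card ≤ d + 1) :=
  pure_nearCone_eq_skeleton_cone_general d K hK hNC hpure
end

section
/- Let (K,K') be a shifted family pair on ground set [1,n], where for each vertex λ, d_λ(K,K') = |{F ∈ K : λ ∈ F and F∖{λ} ∉ K'}|. Then the degrees are weakly decreasing in the vertex order: if 1 ≤ λ < μ ≤ n, then d_λ(K,K') ≥ d_μ(K,K'). -/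
open Finset

/-- The degree of a vertex `λ` in the family pair `(K,K')`:
`d_λ(K,K') = |{F ∈ K : λ ∈ F, F∖{λ} ∉ K'}|`. -/
def pairDeg (K K' : Finset (Finset ℕ)) (l : ℕ) : ℕ :=
  (K.filter (fun F => l ∈ F ∧ F.erase l ∉ K')).card

/-! The sets through `μ` counted by `d_μ` inject into those through `λ` counted by `d_λ`: keep `F`
if `λ ∈ F`, otherwise replace `μ` by `λ`. Shiftedness of `K` keeps the replaced set in `K`, and
shiftedness of `K'` turns `F ∖ {λ} ∈ K'` into `F ∖ {μ} ∈ K'`. The map is injective because its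
image contains `μ` exactly when `λ ∈ F`. -/

namespace List

theorem orderedInsert_of_forall_rel {α : Type*} {r : α → α → Prop} [DecidableRel r]
    {a : α} {s : List α} (h : ∀ b ∈ s, r a b) : s.orderedInsert r a = a :: s := by
  cases s with
  | nil => rfl
  | cons b s => exact orderedInsert_cons_of_le r s (h b mem_cons_self)

theorem forall₂_le_orderedInsert_erase {α : Type*} [LinearOrder α] {s : List α}
    (hs : s.Pairwise (· ≤ ·)) {l m : α} (hm : m ∈ s) (hlm : l ≤ m) :
    Forall₂ (· ≤ ·) ((s.erase m).orderedInsert (· ≤ ·) l) s := by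
  induction s generalizing l with
  | nil => simp at hm
  | cons a s ih =>
    have has : ∀ b ∈ s, a ≤ b := fun b hb => rel_of_pairwise_cons hs hb
    rcases eq_or_ne m a with rfl | hma
    · rw [erase_cons_head, orderedInsert_of_forall_rel fun b hb => hlm.trans (has b hb)]
      exact .cons hlm (forall₂_refl s)
    have hms : m ∈ s := (mem_cons.1 hm).resolve_left hma
    rw [erase_cons_tail (by simpa using hma.symm)]
    by_cases hla : l ≤ a
    · -- `a ≤ m`, so `a :: s.erase m` is itself an instance of the claim for `s`
      rw [orderedInsert_cons_of_le _ _ hla, ← orderedInsert_of_forall_rel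
        fun b hb => has b (mem_of_mem_erase hb)]
      exact .cons hla (ih hs.of_cons hms (has m hms))
    · rw [orderedInsert_of_not_le _ _ hla]
      exact .cons le_rfl (ih hs.of_cons hms hlm)

end List

namespace Finset

variable {α : Type*} [LinearOrder α]

theorem sort_erase (s : Finset α) (a : α) :
    (s.erase a).sort (· ≤ ·) = (s.sort (· ≤ ·)).erase a := by
  refine List.Perm.eq_of_pairwise' (pairwise_sort _ _)
    ((pairwise_sort _ _).sublist List.erase_sublist) ?_
  rw [← Multiset.coe_eq_coe, ← Multiset.coe_erase, sort_eq, sort_eq, erase_val]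

theorem sort_insert_of_notMem {s : Finset α} {a : α} (ha : a ∉ s) :
    (insert a s).sort (· ≤ ·) = (s.sort (· ≤ ·)).orderedInsert (· ≤ ·) a := by
  refine List.Perm.eq_of_pairwise' (pairwise_sort _ _)
    ((pairwise_sort _ _).orderedInsert _ _) ?_
  rw [← Multiset.coe_eq_coe, Multiset.coe_eq_coe.2 (List.perm_orderedInsert _ _ _),
    ← Multiset.cons_coe, sort_eq, sort_eq, insert_val_of_notMem ha]

end Finset

theorem domP_insert_erase {G : Finset ℕ} {l m : ℕ} (hlm : l ≤ m) (hl : l ∉ G) (hm : m ∈ G) :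
    domP (insert l (G.erase m)) G := by
  rw [domP, sort_insert_of_notMem fun h => hl (mem_of_mem_erase h), sort_erase]
  exact List.forall₂_le_orderedInsert_erase (pairwise_sort _ _) (mem_sort _ |>.2 hm) hlm

namespace ShiftedOn

variable {A : Finset ℕ} {K : Finset (Finset ℕ)} {G : Finset ℕ} {l m : ℕ}

theorem insert_erase_mem (hK : ShiftedOn A K) (hG : G ∈ K) (hGA : G ⊆ A) (hlA : l ∈ A)
    (hlm : l ≤ m) (hlG : l ∉ G) (hmG : m ∈ G) : insert l (G.erase m) ∈ K :=
  hK G hG _ (insert_subset hlA ((erase_subset _ _).trans hGA)) (domP_insert_erase hlm hlG hmG)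

theorem erase_mem_of_erase_mem (hK : ShiftedOn A K) (hGA : G ⊆ A) (hlm : l < m)
    (hlG : l ∈ G) (hmG : m ∈ G) (h : G.erase l ∈ K) : G.erase m ∈ K := by
  have hreplace : insert l ((G.erase l).erase m) = G.erase m := by
    rw [erase_right_comm, insert_erase (mem_erase.2 ⟨hlm.ne, hlG⟩)]
  rw [← hreplace]
  exact hK.insert_erase_mem h ((erase_subset _ _).trans hGA) (hGA hlG) hlm.le
    (notMem_erase _ _) (mem_erase.2 ⟨hlm.ne', hmG⟩)

end ShiftedOn

theorem injOn_ite_insert_erase {α : Type*} [DecidableEq α] {l m : α} (hlm : l ≠ m) :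
    Set.InjOn (fun F : Finset α => if l ∈ F then F else insert l (F.erase m)) {F | m ∈ F} := by
  refine Set.LeftInvOn.injOn (f₁' := fun G => if m ∈ G then G else insert m (G.erase l)) ?_
  intro F (hmF : m ∈ F)
  by_cases hlF : l ∈ F
  · simp [hlF, hmF]
  · have hlF' : l ∉ F.erase m := fun h => hlF (mem_of_mem_erase h)
    simp [hlF, hlm.symm, erase_insert hlF', insert_erase hmF]

theorem pairDeg_monotone_general (n : ℕ) (K K' : Finset (Finset ℕ))
    (hKA : ∀ F ∈ K, F ⊆ Finset.Icc 1 n)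
    (hK : ShiftedOn (Finset.Icc 1 n) K) (hK' : ShiftedOn (Finset.Icc 1 n) K')
    (l m : ℕ) (hl : 1 ≤ l) (hlm : l < m) (hm : m ≤ n) :
    pairDeg K K' m ≤ pairDeg K K' l := by
  have hlA : l ∈ Icc 1 n := mem_Icc.2 ⟨hl, hlm.le.trans hm⟩
  refine card_le_card_of_injOn _ ?_
    ((injOn_ite_insert_erase hlm.ne).mono fun F hF => (mem_filter.1 hF).2.1)
  intro F hF
  obtain ⟨hFK, hmF, hFK'⟩ := mem_filter.1 hF
  simp only [mem_coe, mem_filter]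
  split_ifs with hlF
  · exact ⟨hFK, hlF, fun h => hFK' (hK'.erase_mem_of_erase_mem (hKA F hFK) hlm hlF hmF h)⟩
  · refine ⟨hK.insert_erase_mem hFK (hKA F hFK) hlA hlm.le hlF hmF, mem_insert_self _ _, ?_⟩
    rwa [erase_insert fun h => hlF (mem_of_mem_erase h)]

/-- **Degrees of a shifted family pair are weakly decreasing in the vertex order.**
Let `(K,K')` be a shifted family pair on `[1,n]`, with `K` a `k`-family and `K'`
a `(k−1)`-family.  If `1 ≤ λ < μ ≤ n` then `d_λ(K,K') ≥ d_μ(K,K')`. -/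
theorem pairDeg_monotone (n k : ℕ) (K K' : Finset (Finset ℕ))
    (hKA : ∀ F ∈ K, F ⊆ Finset.Icc 1 n) (hK'A : ∀ F ∈ K', F ⊆ Finset.Icc 1 n)
    (hKk : ∀ F ∈ K, F.card = k) (hK'k : ∀ F ∈ K', F.card = k - 1)
    (hK : ShiftedOn (Finset.Icc 1 n) K) (hK' : ShiftedOn (Finset.Icc 1 n) K')
    (l m : ℕ) (hl : 1 ≤ l) (hlm : l < m) (hm : m ≤ n) :
    pairDeg K K' m ≤ pairDeg K K' l :=
  pairDeg_monotone_general n K K' hKA hK hK' l m hl hlm hm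
end

section
/- Let K be a shifted k-family and K' a shifted (k−1)-family on ground set [1,n]. Then: (1) d_1(K,K') = |K/1| − |K'−1|; and (2) for every λ > 1, d_λ(K,K') = d_λ(K−1, K'−1) + d_λ(K/1, K'/1). -/
/-!
Split every family according to whether its members contain the vertex `e`. For `l ≠ e`, the sets
counted by `d_l(K, K')` that avoid `e` are exactly those counted by `d_l(K − e, K' − e)`, and erasing
`e` from the others gives exactly those counted by `d_l(K/e, K'/e)`, because
`(F − e) − l ∈ K'/e ↔ F − l ∈ K'` when `e ∈ F`. For `l = e`, erasing `e` identifies the sets counted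
by `d_e(K, K')` with `K/e ∖ K'`. If `K` is shifted, replacing any vertex of a set of `K` by `1` stays
inside `K`, so `K' − 1 ⊆ ∂K − 1 ⊆ K/1`; hence `K/1 ∩ K' = K' − 1` and
`d_1(K, K') = |K/1| − |K' − 1|`.
-/

open Finset

/-- The unsigned boundary of a family. -/
def ubd (K : Finset (Finset ℕ)) : Finset (Finset ℕ) :=
  K.biUnion fun F => F.image fun x => F.erase x

/-- Deletion of a vertex from a family. -/
def famDel (K : Finset (Finset ℕ)) (e : ℕ) : Finset (Finset ℕ) :=
  K.filter fun F => e ∉ F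

/-- Contraction of a vertex in a family. -/
def famCon (K : Finset (Finset ℕ)) (e : ℕ) : Finset (Finset ℕ) :=
  (K.filter fun F => e ∈ F).image fun F => F.erase e

theorem Finset.sort_sublist_sort_of_subset {α : Type*} [LinearOrder α] {s t : Finset α}
    (h : s ⊆ t) : (s.sort (· ≤ ·)).Sublist (t.sort (· ≤ ·)) :=
  List.sublist_of_subperm_of_pairwise
    (List.subperm_of_subset (sort_nodup _ _) fun _ ha ↦ (mem_sort _).2 (h ((mem_sort _).1 ha)))
    (pairwise_sort _ _) (pairwise_sort _ _)

theorem List.forall₂_le_tail_of_sublist {α : Type*} [Preorder α] {l m : List α} (h : l.Sublist m)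
    (hm : m.Pairwise (· ≤ ·)) (hlen : m.length = l.length + 1) :
    List.Forall₂ (· ≤ ·) l m.tail := by
  induction h with
  | slnil => simp at hlen
  | @cons l m a h _ =>
    rw [h.eq_of_length (by simpa using hlen.symm)]
    exact List.forall₂_same.mpr fun x _ ↦ le_refl x
  | @cons_cons l m a h ih =>
    obtain _ | ⟨c, m⟩ := m
    · simp at hlen
    · exact .cons (List.rel_of_pairwise_cons hm (by simp))
        (ih hm.of_cons (by simpa using hlen))

theorem domP_insert_of_forall_le {a x : ℕ} {G : Finset ℕ} (ha : ∀ b ∈ insert x G, a ≤ b)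
    (haG : a ∉ G) (hxG : x ∉ G) : domP (insert a G) (insert x G) := by
  have hlen : ((insert x G).sort (· ≤ ·)).length = (G.sort (· ≤ ·)).length + 1 := by
    simp [card_insert_of_notMem hxG]
  have hsub := sort_sublist_sort_of_subset (subset_insert x G)
  have hsorted := pairwise_sort (insert x G) (· ≤ ·)
  -- `insert a G` sorts to `a :: sort G`, and `sort G`, a sublist of `sort (insert x G)` of one
  -- element less, is dominated by the tail of that sorted list.
  unfold domP
  rw [sort_insert _ (fun b hb ↦ ha b (mem_insert_of_mem hb)) haG]
  rcases hm : (insert x G).sort (· ≤ ·) with _ | ⟨c, m⟩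
  · simp [hm] at hlen
  · have hc : c ∈ insert x G := (mem_sort _).mp (hm ▸ List.mem_cons_self)
    rw [hm] at hlen hsub hsorted
    exact .cons (ha c hc) (List.forall₂_le_tail_of_sublist hsub hsorted hlen)

theorem ShiftedOn.insert_one_mem_of_mem_ubd {n : ℕ} {K : Finset (Finset ℕ)}
    (hK : ShiftedOn (Icc 1 n) K) (hKA : ∀ F ∈ K, F ⊆ Icc 1 n) {G : Finset ℕ} (hG : G ∈ ubd K)
    (h1 : 1 ∉ G) : insert 1 G ∈ K := by
  obtain ⟨F, hF, x, hxF, rfl⟩ : ∃ F ∈ K, ∃ x ∈ F, F.erase x = G := by simpa [ubd] using hG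
  have hx : x ∈ Icc 1 n := hKA F hF hxF
  have hGA : F.erase x ⊆ Icc 1 n := (erase_subset x F).trans (hKA F hF)
  have h1A : 1 ∈ Icc 1 n := by simp only [mem_Icc] at hx ⊢; omega
  have hdom : domP (insert 1 (F.erase x)) F := by
    have h1le : ∀ b ∈ insert x (F.erase x), 1 ≤ b := by
      rw [insert_erase hxF]
      exact fun b hb ↦ (mem_Icc.mp (hKA F hF hb)).1
    simpa [insert_erase hxF] using domP_insert_of_forall_le h1le h1 (notMem_erase x F)
  exact hK F hF _ (insert_subset h1A hGA) hdom

theorem mem_famCon {K : Finset (Finset ℕ)} {e : ℕ} {G : Finset ℕ} :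
    G ∈ famCon K e ↔ e ∉ G ∧ insert e G ∈ K := by
  constructor
  · intro hG
    obtain ⟨F, ⟨hF, heF⟩, rfl⟩ := by simpa [famCon] using hG
    exact ⟨notMem_erase e F, by rwa [insert_erase heF]⟩
  · rintro ⟨heG, hG⟩
    exact mem_image.mpr ⟨insert e G, mem_filter.mpr ⟨hG, mem_insert_self e G⟩, erase_insert heG⟩

theorem erase_erase_mem_famCon_iff {K' : Finset (Finset ℕ)} {F : Finset ℕ} {e l : ℕ}
    (hl : l ≠ e) (he : e ∈ F) : (F.erase e).erase l ∈ famCon K' e ↔ F.erase l ∈ K' := by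
  rw [mem_famCon, erase_right_comm, insert_erase (mem_erase.2 ⟨hl.symm, he⟩)]
  simp

theorem famCon_inter_eq_famDel {K K' : Finset (Finset ℕ)} {e : ℕ}
    (h : ∀ G ∈ famDel K' e, insert e G ∈ K) : famCon K e ∩ K' = famDel K' e := by
  ext G
  simp only [mem_inter, mem_famCon, famDel, mem_filter]
  constructor
  · rintro ⟨⟨heG, -⟩, hG⟩
    exact ⟨hG, heG⟩
  · rintro ⟨hG, heG⟩
    exact ⟨⟨heG, h G (mem_filter.2 ⟨hG, heG⟩)⟩, hG⟩

theorem card_image_erase {α : Type*} [DecidableEq α] {s : Finset (Finset α)} {e : α}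
    (h : ∀ F ∈ s, e ∈ F) : (s.image (·.erase e)).card = s.card :=
  card_image_of_injOn fun _ hF _ hG ↦ erase_injOn' e (h _ hF) (h _ hG)

theorem pairDeg_eq_card_famCon_sdiff (K K' : Finset (Finset ℕ)) (e : ℕ) :
    pairDeg K K' e = (famCon K e \ K').card := by
  rw [pairDeg, famCon, sdiff_eq_filter, filter_image,
    card_image_erase fun F hF ↦ (mem_filter.1 (mem_filter.1 hF).1).2, filter_filter]

theorem pairDeg_add_card_famDel {K K' : Finset (Finset ℕ)} {e : ℕ}
    (h : ∀ G ∈ famDel K' e, insert e G ∈ K) :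
    pairDeg K K' e + (famDel K' e).card = (famCon K e).card := by
  rw [pairDeg_eq_card_famCon_sdiff, ← famCon_inter_eq_famDel h, card_sdiff_add_card_inter]

theorem pairDeg_famDel (K K' : Finset (Finset ℕ)) (e l : ℕ) :
    pairDeg (famDel K e) (famDel K' e) l =
      ((K.filter fun F ↦ l ∈ F ∧ F.erase l ∉ K').filter (e ∉ ·)).card := by
  unfold pairDeg famDel
  congr 1
  ext F
  simp only [mem_filter, mem_erase]
  tauto

theorem pairDeg_famCon (K K' : Finset (Finset ℕ)) {e l : ℕ} (hl : l ≠ e) :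
    pairDeg (famCon K e) (famCon K' e) l =
      ((K.filter fun F ↦ l ∈ F ∧ F.erase l ∉ K').filter (e ∈ ·)).card := by
  rw [pairDeg, famCon.eq_1 K, filter_image,
    card_image_erase fun F hF ↦ (mem_filter.1 (mem_filter.1 hF).1).2]
  congr 1
  ext F
  simp only [mem_filter]
  constructor
  · rintro ⟨⟨hF, he⟩, hlF, hnot⟩
    exact ⟨⟨hF, mem_of_mem_erase hlF, (erase_erase_mem_famCon_iff hl he).not.1 hnot⟩, he⟩
  · rintro ⟨⟨hF, hlF, hnot⟩, he⟩
    exact ⟨⟨hF, he⟩, mem_erase.2 ⟨hl, hlF⟩, (erase_erase_mem_famCon_iff hl he).not.2 hnot⟩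

theorem pairDeg_eq_pairDeg_famDel_add_pairDeg_famCon (K K' : Finset (Finset ℕ)) {e l : ℕ}
    (hl : l ≠ e) :
    pairDeg K K' l =
      pairDeg (famDel K e) (famDel K' e) l + pairDeg (famCon K e) (famCon K' e) l := by
  rw [pairDeg_famDel, pairDeg_famCon K K' hl, add_comm, card_filter_add_card_filter_not]
  rfl

theorem pairDeg_recursion_general (n : ℕ) (K K' : Finset (Finset ℕ))
    (hKA : ∀ F ∈ K, F ⊆ Finset.Icc 1 n)
    (hK : ShiftedOn (Finset.Icc 1 n) K)
    (hKK' : K' ⊆ ubd K) :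
    ((pairDeg K K' 1 : ℤ) =
        ((famCon K 1).card : ℤ) - ((famDel K' 1).card : ℤ)) ∧
    (∀ l : ℕ, 1 < l →
      pairDeg K K' l =
        pairDeg (famDel K 1) (famDel K' 1) l +
        pairDeg (famCon K 1) (famCon K' 1) l) := by
  refine ⟨?_, fun l hl ↦ pairDeg_eq_pairDeg_famDel_add_pairDeg_famCon K K' hl.ne'⟩
  have h := pairDeg_add_card_famDel (K := K) (K' := K') (e := 1) fun G hG ↦
    hK.insert_one_mem_of_mem_ubd hKA (hKK' (mem_filter.1 hG).1) (mem_filter.1 hG).2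
  omega

/-- **Recursion for degrees of a shifted family pair.**
Let `K` be a shifted `k`-family and `K'` a shifted `(k−1)`-family on `[1,n]`
with `K' ⊆ ∂K`.  Then (1) `d_1(K,K') = |K/1| − |K'−1|`, and
(2) for every `λ > 1`, `d_λ(K,K') = d_λ(K−1,K'−1) + d_λ(K/1,K'/1)`. -/
theorem pairDeg_recursion (n k : ℕ) (K K' : Finset (Finset ℕ))
    (hKA : ∀ F ∈ K, F ⊆ Finset.Icc 1 n) (hK'A : ∀ F ∈ K', F ⊆ Finset.Icc 1 n)
    (hKk : ∀ F ∈ K, F.card = k) (hK'k : ∀ F ∈ K', F.card = k - 1)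
    (hK : ShiftedOn (Finset.Icc 1 n) K) (hK' : ShiftedOn (Finset.Icc 1 n) K')
    (hKK' : K' ⊆ ubd K) :
    ((pairDeg K K' 1 : ℤ) =
        ((famCon K 1).card : ℤ) - ((famDel K' 1).card : ℤ)) ∧
    (∀ l : ℕ, 1 < l →
      pairDeg K K' l =
        pairDeg (famDel K 1) (famDel K' 1) l +
        pairDeg (famCon K 1) (famCon K' 1) l) :=
  pairDeg_recursion_general n K K' hKA hK hKK'
end

section
/- Let Δ be a finite simplicial complex on vertex set [n] and let Δ* = {[n]∖F : F ∈ Δ} be its dual order filter. Then for every i, the multiset of eigenvalues of the Laplacian in dimension i of Δ equals the multiset of eigenvalues of the Laplacian in dimension n−i−2 of Δ*: s_i(Δ) = s_{n−i−2}(Δ*). Explicitly, the map φ_i : C_i(Δ) → C_{n−i−2}(Δ*) defined by [F] ↦ σ(F)[[n]∖F], with σ(F) = (−1)^{Σ_{j∈F} j}, satisfies φ_{i+1}^{−1} ∘ ∂_{Δ*, n−i−2} ∘ φ_i = −∂*_{Δ, i+1}, and hence conjugates L_{n−i−2}(Δ*) to L_i(Δ). -/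
open Finset Matrix

namespace SpecRec

variable {V : Type*} [LinearOrder V] [Fintype V]

/-- The incidence sign `(−1)^{#{x ∈ G : x < v}}` where `v` is the unique element
of `F∖G` (for `G ⊂ F` with `|F| = |G|+1`). -/
def sgn (G F : Finset V) : ℝ :=
  (-1 : ℝ) ^ ((G.filter fun x => ∃ v ∈ F \ G, x < v).card)

/-- Entry of the simplicial boundary matrix: `±1` if `G` is a facet of `F`,
and `0` otherwise. -/
def bnd (G F : Finset V) : ℝ :=
  if G ⊆ F ∧ G.card + 1 = F.card then sgn G F else 0

/-- The faces of the simplicial pair `(K,K')` of cardinality `k`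
(dimension `k−1`); these index the relative `(k−1)`-chains. -/
abbrev pface (K K' : Finset (Finset V)) (k : ℕ) :=
  {F : Finset V // F ∈ K ∧ F ∉ K' ∧ F.card = k}

/-- The matrix (in the natural face bases) of the relative boundary map of the
pair `(K,K')` from chains spanned by faces of cardinality `k` to chains spanned
by faces of cardinality `j` (nonzero only when `j = k − 1`). -/
def bmat (K K' : Finset (Finset V)) (j k : ℕ) :
    Matrix (pface K K' j) (pface K K' k) ℝ :=
  fun G F => bnd G.1 F.1

/-- The combinatorial Laplacian `L = ∂∂* + ∂*∂` of the pair `(K,K')` acting on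
chains spanned by faces of cardinality `k` (dimension `k−1`). -/
noncomputable def lap (K K' : Finset (Finset V)) (k : ℕ) :
    Matrix (pface K K' k) (pface K K' k) ℝ :=
  bmat K K' k (k + 1) * (bmat K K' k (k + 1))ᵀ +
    (bmat K K' (k - 1) k)ᵀ * bmat K K' (k - 1) k

end SpecRec

open SpecRec

/-! Complementation `F ↦ [n]∖F` is a bijection between the `i`-faces of `Δ` and the
`(n−i−2)`-faces of `Δ*`, and it reverses the facet relation: `G ⋖ F` iff `Fᶜ ⋖ Gᶜ`.
Comparing the incidence signs, `∂[Aᶜ, Bᶜ] = σ(A) σ(B) ∂[B, A]` because the elements below the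
removed vertex `v` split between `B` and `Bᶜ` and number `rank v` in total. Hence, entrywise,
the up- and down-Laplacians swap roles and `L(Δ*)` is `D L(Δ) D` for the diagonal involution
`D = diag σ`, which has the same characteristic polynomial. -/

lemma Matrix.charpoly_mul_mul_of_mul_self_eq_one {R n : Type*} [CommRing R] [Fintype n]
    [DecidableEq n] {D : Matrix n n R} (hD : D * D = 1) (M : Matrix n n R) :
    (D * M * D).charpoly = M.charpoly := by
  rw [charpoly_mul_comm, ← Matrix.mul_assoc, hD, Matrix.one_mul]

namespace SpecRec

section LinearOrder

variable {V : Type*} [LinearOrder V]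

lemma subset_and_card_add_one_eq_iff_covBy {G F : Finset V} :
    (G ⊆ F ∧ #G + 1 = #F) ↔ G ⋖ F := by
  rw [covBy_iff_card_sdiff_eq_one]
  refine and_congr_right fun hGF => ?_
  have := card_le_card hGF
  rw [card_sdiff_of_subset hGF]
  omega

lemma bnd_of_covBy {G F : Finset V} (h : G ⋖ F) : bnd G F = sgn G F :=
  if_pos (subset_and_card_add_one_eq_iff_covBy.mpr h)

lemma bnd_of_not_covBy {G F : Finset V} (h : ¬G ⋖ F) : bnd G F = 0 :=
  if_neg (mt subset_and_card_add_one_eq_iff_covBy.mp h)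

lemma sgn_insert {B : Finset V} {v : V} (hv : v ∉ B) :
    sgn B (insert v B) = (-1 : ℝ) ^ #{x ∈ B | x < v} := by
  simp [sgn, insert_sdiff_cancel hv]

lemma card_add_one_eq_of_bnd_ne_zero {G F : Finset V} (h : bnd G F ≠ 0) : #G + 1 = #F := by
  by_contra hcard
  exact h (if_neg fun hGF => hcard hGF.2)

end LinearOrder

variable {V : Type*} [LinearOrder V] [Fintype V]

lemma compl_covBy_compl {A B : Finset V} : Aᶜ ⋖ Bᶜ ↔ B ⋖ A :=
  toDual_covBy_toDual_iff.symm.trans (apply_covBy_apply_iff (OrderIso.compl (Finset V)))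

lemma card_filter_lt_add_card_compl_filter_lt (B : Finset V) (v : V) :
    #{x ∈ B | x < v} + #{x ∈ Bᶜ | x < v} = #{x | x < v} := by
  rw [← card_union_of_disjoint (disjoint_filter_filter disjoint_compl_right), ← filter_union,
    union_compl]

/-- `#{x | x < j}` is the rank of `j`, so for `V = Fin n` this is the sign
`σ(F) = (−1)^{Σ_{j∈F} j}` of the paper. -/
noncomputable def dualSign (A : Finset V) : ℝ := (-1) ^ ∑ j ∈ A, #{x | x < j}

lemma dualSign_mul_self (A : Finset V) : dualSign A * dualSign A = 1 := by
  rw [dualSign, ← mul_pow]; norm_num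

lemma bnd_compl_compl (A B : Finset V) :
    bnd Aᶜ Bᶜ = dualSign A * dualSign B * bnd B A := by
  by_cases hBA : B ⋖ A
  · obtain ⟨v, hv, rfl⟩ := hBA.exists_finset_insert
    have hvc : v ∉ (insert v B)ᶜ := by simp
    have hBc : Bᶜ = insert v (insert v B)ᶜ := by
      rw [compl_insert, insert_erase (mem_compl.mpr hv)]
    have hcount : #{x ∈ (insert v B)ᶜ | x < v} = #{x ∈ Bᶜ | x < v} := by
      rw [compl_insert, filter_erase, erase_eq_of_notMem (by simp)]
    have hsplit := card_filter_lt_add_card_compl_filter_lt B v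
    rw [bnd_of_covBy (covBy_insert hv), hBc, bnd_of_covBy (covBy_insert hvc), sgn_insert hv,
      sgn_insert hvc, dualSign, dualSign, sum_insert hv, ← pow_add, ← pow_add, hcount]
    rw [show #{x | x < v} + ∑ j ∈ B, #{x | x < j} + ∑ j ∈ B, #{x | x < j} + #{x ∈ B | x < v}
        = #{x ∈ Bᶜ | x < v} + 2 * (∑ j ∈ B, #{x | x < j} + #{x ∈ B | x < v}) by omega,
      pow_add, pow_mul]
    norm_num
  · rw [bnd_of_not_covBy hBA, bnd_of_not_covBy (mt compl_covBy_compl.mp hBA), mul_zero]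

lemma sum_pface_eq_sum_sdiff (K K' : Finset (Finset V)) (j : ℕ) {f : Finset V → ℝ}
    (hf : ∀ H, f H ≠ 0 → #H = j) : ∑ H : pface K K' j, f H.1 = ∑ H ∈ K \ K', f H := by
  rw [← sum_filter_of_ne fun H _ => hf H,
    sum_subtype (p := fun H => H ∈ K ∧ H ∉ K' ∧ #H = j) _ fun H => by simp [and_assoc]]

lemma lap_apply (K K' : Finset (Finset V)) (k : ℕ) (F G : pface K K' k) :
    lap K K' k F G =
      ∑ H ∈ K \ K', bnd F.1 H * bnd G.1 H + ∑ E ∈ K \ K', bnd E F.1 * bnd E G.1 := by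
  simp only [lap, Matrix.add_apply, mul_apply, transpose_apply, bmat]
  congr 1
  · refine sum_pface_eq_sum_sdiff K K' _ (f := fun H => bnd F.1 H * bnd G.1 H) fun H hH => ?_
    rw [← card_add_one_eq_of_bnd_ne_zero (left_ne_zero_of_mul hH), F.2.2.2]
  · refine sum_pface_eq_sum_sdiff K K' _ (f := fun E => bnd E F.1 * bnd E G.1) fun E hE => ?_
    have := card_add_one_eq_of_bnd_ne_zero (left_ne_zero_of_mul hE)
    rw [F.2.2.2] at this
    omega

def complEquiv (K K' : Finset (Finset V)) {a b : ℕ} (hab : a + b = Fintype.card V) :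
    pface (K.image fun F => Fᶜ) (K'.image fun F => Fᶜ) a ≃ pface K K' b where
  toFun F := ⟨F.1ᶜ, by
    obtain ⟨hK, hK', hcard⟩ := F.2
    refine ⟨?_, ?_, ?_⟩
    · simpa using hK
    · simpa using hK'
    · rw [card_compl, hcard]; omega⟩
  invFun G := ⟨G.1ᶜ, by
    obtain ⟨hK, hK', hcard⟩ := G.2
    refine ⟨mem_image_of_mem _ hK, by simpa using hK', ?_⟩
    rw [card_compl, hcard]; omega⟩
  left_inv F := Subtype.ext (compl_compl _)
  right_inv G := Subtype.ext (compl_compl _)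

lemma lap_image_compl_apply (K K' : Finset (Finset V)) {a b : ℕ} (hab : a + b = Fintype.card V)
    (F G : pface K K' b) :
    lap (K.image fun F => Fᶜ) (K'.image fun F => Fᶜ) a
        ((complEquiv K K' hab).symm F) ((complEquiv K K' hab).symm G) =
      dualSign F.1 * dualSign G.1 * lap K K' b F G := by
  rw [lap_apply, lap_apply, ← image_sdiff _ _ compl_injective,
    sum_image compl_injective.injOn, sum_image compl_injective.injOn, add_comm, mul_add,
    mul_sum, mul_sum]
  congr 1 <;> refine sum_congr rfl fun H _ => ?_ <;>
    simp only [complEquiv, Equiv.coe_fn_symm_mk, bnd_compl_compl]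
  · linear_combination (dualSign F.1 * dualSign G.1 * bnd F.1 H * bnd G.1 H) * dualSign_mul_self H
  · linear_combination (dualSign F.1 * dualSign G.1 * bnd H F.1 * bnd H G.1) * dualSign_mul_self H

lemma charpoly_lap_image_compl (K K' : Finset (Finset V)) {a b : ℕ}
    (hab : a + b = Fintype.card V) :
    (lap (K.image fun F => Fᶜ) (K'.image fun F => Fᶜ) a).charpoly = (lap K K' b).charpoly := by
  let D := diagonal fun F : pface K K' b => dualSign F.1
  have hD : D * D = 1 := by simp [D, diagonal_mul_diagonal, dualSign_mul_self]
  have hconj : reindex (complEquiv K K' hab) (complEquiv K K' hab)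
      (lap (K.image fun F => Fᶜ) (K'.image fun F => Fᶜ) a) = D * lap K K' b * D := by
    ext F G
    rw [reindex_apply, submatrix_apply, lap_image_compl_apply, mul_diagonal, diagonal_mul]
    ring
  rw [← charpoly_reindex (complEquiv K K' hab), hconj, charpoly_mul_mul_of_mul_self_eq_one hD]

end SpecRec

theorem spectrum_dual_general {n : ℕ} (K : Finset (Finset (Fin n)))
    (k : ℕ) (hk : k ≤ n) :
    (lap K ∅ k).charpoly.roots =
      (lap (K.image fun F => Fᶜ) ∅ (n - k)).charpoly.roots := by
  have h := charpoly_lap_image_compl K ∅ (a := n - k) (b := k) (by rw [Fintype.card_fin]; omega)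
  rw [image_empty] at h
  rw [h]

/-- **Laplacian spectra of a complex and of its dual order filter.**
Let `Δ` be a simplicial complex on `[n]` (here the vertex type `Fin n`) and let
`Δ* = {[n]∖F : F ∈ Δ}` be its dual order filter.  Then for every `k ≤ n`, the
multiset of eigenvalues of the Laplacian of `Δ` on faces of cardinality `k`
(dimension `k−1`) equals the multiset of eigenvalues of the Laplacian of `Δ*`
on faces of cardinality `n−k` (dimension `n−k−1`); i.e.
`s_{i}(Δ) = s_{n−i−2}(Δ*)` for all `i`.  (This is induced by the map
`φ : [F] ↦ σ(F)[[n]∖F]`, `σ(F) = (−1)^{Σ_{j∈F} j}`, which satisfies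
`φ_{i+1}⁻¹ ∘ ∂_{Δ*,n−i−2} ∘ φ_i = −∂*_{Δ,i+1}` and hence conjugates
`L_{n−i−2}(Δ*)` to `L_i(Δ)`.) -/
theorem spectrum_dual {n : ℕ} (K : Finset (Finset (Fin n)))
    (hK : ∀ F ∈ K, ∀ G ⊆ F, G ∈ K)           -- `Δ` is a simplicial complex
    (k : ℕ) (hk : k ≤ n) :
    (lap K ∅ k).charpoly.roots =
      (lap (K.image fun F => Fᶜ) ∅ (n - k)).charpoly.roots :=
  spectrum_dual_general K k hk
end
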